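/- arXiv:2109.11537 — 6 statements merged into one kernel-verified Lean document; each statement's English description precedes it below -/
import Mathlib

section
/- Let y, τ ∈ ℝⁿ with 0 < τ_i ≤ 1 and y_i² ≤ τ_i · ‖y‖₂² for all i ∈ [n]. Let h ≥ 1 and set p_i = h·√τ_i. Let 1 ≤ q ≤ 2, let S ⊆ [n] and S̄ = [n] \ S be such that ‖y_{S̄}‖₂ ≥ 1/2 and |y_i| ≤ 1 for all i ∈ S. Then there is an absolute constant c̄ (one may take c̄ = 8) such that Σ_{i∈S̄} (1/p_i)·|y_i|^{2q} + Σ_{i∈S} (1/p_i)·y_i⁴ ≤ (c̄/h)·(‖y_{S̄}‖_q^q + ‖y_S‖₂²)². -/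
/-!
Write `s = ‖y‖₂`. The leverage condition gives `|y_i| ≤ √τ_i · s`, so each summand is at most
`s^q |y_i|^q / h` on `S̄` and `s y_i² / h` on `S` (there `y_i² ≤ |y_i|` because `|y_i| ≤ 1`);
hence the left side is at most `(s^q A + s B) / h` with `A = ‖y_{S̄}‖_q^q` and `B = ‖y_S‖₂²`.
Since `‖·‖_q ≥ ‖·‖₂` for `q ≤ 2` and `‖y_{S̄}‖₂ ≥ 1/2`, we get `A ≥ 1/4`, and subadditivity of
`x ↦ x^{q/2}` gives `s^q ≤ A + 1 + B`. As `A ≥ 1/4` absorbs the constants, `c̄ = 5` works.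
-/

open Finset

lemma Real.rpow_sum_le_sum_rpow {ι : Type*} (s : Finset ι) {f : ι → ℝ} {p : ℝ}
    (hf : ∀ i ∈ s, 0 ≤ f i) (hp : 0 < p) (hp1 : p ≤ 1) :
    (∑ i ∈ s, f i) ^ p ≤ ∑ i ∈ s, f i ^ p := by
  induction s using Finset.cons_induction with
  | empty => simp [Real.zero_rpow hp.ne']
  | cons a s _ ih =>
    rw [sum_cons, sum_cons]
    have hfs : ∀ i ∈ s, 0 ≤ f i := fun i hi => hf i (mem_cons_of_mem hi)
    calc (f a + ∑ i ∈ s, f i) ^ p ≤ f a ^ p + (∑ i ∈ s, f i) ^ p :=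
          Real.rpow_add_le_add_rpow (hf a (mem_cons_self a s)) (sum_nonneg hfs) hp.le hp1
      _ ≤ f a ^ p + ∑ i ∈ s, f i ^ p := by gcongr; exact ih hfs

lemma Real.sqrt_sum_sq_rpow_le_sum_abs_rpow {ι : Type*} (s : Finset ι) (x : ι → ℝ) {q : ℝ}
    (hq : 0 < q) (hq2 : q ≤ 2) :
    √(∑ i ∈ s, x i ^ 2) ^ q ≤ ∑ i ∈ s, |x i| ^ q := by
  rw [← Real.rpow_div_two_eq_sqrt q (sum_nonneg fun i _ => sq_nonneg (x i))]
  calc (∑ i ∈ s, x i ^ 2) ^ (q / 2) ≤ ∑ i ∈ s, (x i ^ 2) ^ (q / 2) :=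
        Real.rpow_sum_le_sum_rpow s (fun i _ => sq_nonneg (x i)) (by linarith) (by linarith)
    _ = ∑ i ∈ s, |x i| ^ q := by
        refine sum_congr rfl fun i _ => ?_
        rw [Real.rpow_div_two_eq_sqrt q (sq_nonneg (x i)), Real.sqrt_sq_eq_abs]

lemma Real.sqrt_add_rpow_le {a b q : ℝ} (ha : 0 ≤ a) (hb : 0 ≤ b) (hq : 0 ≤ q) (hq2 : q ≤ 2) :
    √(a + b) ^ q ≤ √a ^ q + √b ^ q := by
  simp only [← Real.rpow_div_two_eq_sqrt, ha, hb, add_nonneg ha hb]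
  exact Real.rpow_add_le_add_rpow ha hb (by linarith) (by linarith)

lemma Real.rpow_le_one_add_rpow {x a b : ℝ} (hx : 0 ≤ x) (ha : 0 ≤ a) (hab : a ≤ b) :
    x ^ a ≤ 1 + x ^ b := by
  rcases le_total x 1 with hx1 | hx1
  · linarith [Real.rpow_le_one hx hx1 ha, Real.rpow_nonneg hx b]
  · linarith [Real.rpow_le_rpow_of_exponent_le hx1 hab]

lemma Real.rpow_le_mul_rpow_of_le_mul {x t c q : ℝ} (hx : 0 ≤ x) (ht : 0 ≤ t) (ht1 : t ≤ 1)
    (hc : 0 ≤ c) (hq : 1 ≤ q) (h : x ≤ t * c) : x ^ q ≤ t * c ^ q := by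
  calc x ^ q ≤ (t * c) ^ q := Real.rpow_le_rpow hx h (by linarith)
    _ = t ^ q * c ^ q := Real.mul_rpow ht hc
    _ ≤ t ^ (1 : ℝ) * c ^ q := by
        refine mul_le_mul_of_nonneg_right ?_ (Real.rpow_nonneg hc q)
        rcases ht.eq_or_lt with rfl | ht0
        · rw [Real.zero_rpow (by linarith), Real.zero_rpow one_ne_zero]
        · exact Real.rpow_le_rpow_of_exponent_ge ht0 ht1 hq
    _ = t * c ^ q := by rw [Real.rpow_one]

lemma sum_one_div_mul_sq_le {ι : Type*} (s : Finset ι) {a t : ι → ℝ} {c h : ℝ} (hh : 0 ≤ h)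
    (ht : ∀ i ∈ s, 0 < t i) (ha : ∀ i ∈ s, 0 ≤ a i) (hat : ∀ i ∈ s, a i ≤ t i * c) :
    ∑ i ∈ s, 1 / (h * t i) * a i ^ 2 ≤ c / h * ∑ i ∈ s, a i := by
  rw [mul_sum]
  refine sum_le_sum fun i hi => ?_
  have hdiv : a i / t i ≤ c := by rw [div_le_iff₀ (ht i hi)]; linarith [hat i hi]
  calc 1 / (h * t i) * a i ^ 2 = a i / t i * a i / h := by ring
    _ ≤ c * a i / h := by gcongr; exact ha i hi
    _ = c / h * a i := by ring

lemma one_div_four_le_sum_abs_rpow {ι : Type*} (s : Finset ι) {x : ι → ℝ} {q : ℝ}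
    (hq : 0 < q) (hq2 : q ≤ 2) (hx : 1 / 2 ≤ √(∑ i ∈ s, x i ^ 2)) :
    1 / 4 ≤ ∑ i ∈ s, |x i| ^ q := calc
  (1 : ℝ) / 4 = (1 / 2) ^ (2 : ℝ) := by norm_num
  _ ≤ (1 / 2) ^ q := Real.rpow_le_rpow_of_exponent_ge (by norm_num) (by norm_num) hq2
  _ ≤ √(∑ i ∈ s, x i ^ 2) ^ q := Real.rpow_le_rpow (by norm_num) hx hq.le
  _ ≤ ∑ i ∈ s, |x i| ^ q := Real.sqrt_sum_sq_rpow_le_sum_abs_rpow s x hq hq2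

lemma sqrt_sum_sq_rpow_le_compl_add {ι : Type*} [Fintype ι] [DecidableEq ι] (S : Finset ι)
    (x : ι → ℝ) {q : ℝ} (hq : 0 < q) (hq2 : q ≤ 2) :
    √(∑ i, x i ^ 2) ^ q ≤ 1 + ∑ i ∈ Sᶜ, |x i| ^ q + ∑ i ∈ S, x i ^ 2 := by
  have hS : 0 ≤ ∑ i ∈ S, x i ^ 2 := sum_nonneg fun i _ => sq_nonneg (x i)
  calc √(∑ i, x i ^ 2) ^ q = √(∑ i ∈ Sᶜ, x i ^ 2 + ∑ i ∈ S, x i ^ 2) ^ q := by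
        rw [sum_compl_add_sum]
    _ ≤ √(∑ i ∈ Sᶜ, x i ^ 2) ^ q + √(∑ i ∈ S, x i ^ 2) ^ q :=
        Real.sqrt_add_rpow_le (sum_nonneg fun i _ => sq_nonneg (x i)) hS hq.le hq2
    _ ≤ ∑ i ∈ Sᶜ, |x i| ^ q + (1 + √(∑ i ∈ S, x i ^ 2) ^ (2 : ℝ)) := add_le_add
        (Real.sqrt_sum_sq_rpow_le_sum_abs_rpow _ _ hq hq2)
        (Real.rpow_le_one_add_rpow (Real.sqrt_nonneg _) hq.le hq2)
    _ = 1 + ∑ i ∈ Sᶜ, |x i| ^ q + ∑ i ∈ S, x i ^ 2 := by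
        rw [Real.rpow_two, Real.sq_sqrt hS]; ring

lemma mul_add_mul_le_five_mul_sq {A B u v : ℝ} (hA : 1 / 4 ≤ A) (hB : 0 ≤ B)
    (hu : u ≤ 1 + A + B) (hv : v ≤ 1 + u) : u * A + v * B ≤ 5 * (A + B) ^ 2 := by
  nlinarith [mul_le_mul_of_nonneg_right hu (by linarith : (0 : ℝ) ≤ A),
    mul_le_mul_of_nonneg_right hv hB]

/-- second-moment bound for sampling with square roots of leverage-score-type
uniformity weights.  There is an absolute constant `c̄` (one may take `c̄ = 8`) such that
for all `y, τ` with `0 < τ_i ≤ 1`, `y_i² ≤ τ_i‖y‖₂²`, `h ≥ 1`, `p_i = h√τ_i`, `1 ≤ q ≤ 2`,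
`S ⊆ [n]` with `‖y_{S̄}‖₂ ≥ 1/2` and `|y_i| ≤ 1` on `S`:
`Σ_{i∈S̄} (1/p_i)|y_i|^{2q} + Σ_{i∈S} (1/p_i)y_i⁴ ≤ (c̄/h)(‖y_{S̄}‖_q^q + ‖y_S‖₂²)²`. -/
theorem stmt1 :
    ∃ cbar : ℝ, 0 < cbar ∧
      ∀ (n : ℕ) (y τ : Fin n → ℝ),
        (∀ i, 0 < τ i) → (∀ i, τ i ≤ 1) →
        (∀ i, (y i) ^ 2 ≤ τ i * ∑ j, (y j) ^ 2) →
        ∀ h : ℝ, 1 ≤ h →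
        ∀ q : ℝ, 1 ≤ q → q ≤ 2 →
        ∀ S : Finset (Fin n),
          (1 : ℝ) / 2 ≤ Real.sqrt (∑ i ∈ Sᶜ, (y i) ^ 2) →
          (∀ i ∈ S, |y i| ≤ 1) →
          (∑ i ∈ Sᶜ, (1 / (h * Real.sqrt (τ i))) * |y i| ^ (2 * q))
              + ∑ i ∈ S, (1 / (h * Real.sqrt (τ i))) * (y i) ^ 4
            ≤ (cbar / h) * ((∑ i ∈ Sᶜ, |y i| ^ q) + ∑ i ∈ S, (y i) ^ 2) ^ 2 := by
  refine ⟨5, by norm_num, fun n y τ hτ hτ1 hlev h hh q hq hq2 S hD hS => ?_⟩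
  set s := √(∑ j, y j ^ 2)
  set A := ∑ i ∈ Sᶜ, |y i| ^ q
  set B := ∑ i ∈ S, y i ^ 2
  have hs0 : 0 ≤ s := Real.sqrt_nonneg _
  have hτs : ∀ i, 0 < √(τ i) := fun i => Real.sqrt_pos.mpr (hτ i)
  have hy : ∀ i, |y i| ≤ √(τ i) * s := fun i => by
    rw [← Real.sqrt_mul (hτ i).le, ← Real.sqrt_sq_eq_abs]
    exact Real.sqrt_le_sqrt (hlev i)
  have hsumCompl : ∑ i ∈ Sᶜ, 1 / (h * √(τ i)) * |y i| ^ (2 * q) ≤ s ^ q / h * A := by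
    simp only [mul_comm 2 q, Real.rpow_mul (abs_nonneg _), Real.rpow_two]
    exact sum_one_div_mul_sq_le _ (by linarith) (fun i _ => hτs i)
      (fun i _ => Real.rpow_nonneg (abs_nonneg _) q) fun i _ =>
      Real.rpow_le_mul_rpow_of_le_mul (abs_nonneg _) (hτs i).le
        (Real.sqrt_le_one.mpr (hτ1 i)) hs0 hq (hy i)
  have hsumS : ∑ i ∈ S, 1 / (h * √(τ i)) * y i ^ 4 ≤ s / h * B := by
    simp only [show ∀ x : ℝ, x ^ 4 = (x ^ 2) ^ 2 from fun x => by ring]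
    refine sum_one_div_mul_sq_le _ (by linarith) (fun i _ => hτs i) (fun i _ => sq_nonneg _)
      fun i hi => ?_
    nlinarith [hy i, hS i hi, abs_nonneg (y i), sq_abs (y i)]
  have hweights : s ^ q * A + s * B ≤ 5 * (A + B) ^ 2 :=
    mul_add_mul_le_five_mul_sq (one_div_four_le_sum_abs_rpow _ (by linarith) hq2 hD)
      (sum_nonneg fun i _ => sq_nonneg (y i))
      (sqrt_sum_sq_rpow_le_compl_add S y (by linarith) hq2)
      (by simpa only [Real.rpow_one] using Real.rpow_le_one_add_rpow hs0 zero_le_one hq)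
  calc _ ≤ s ^ q / h * A + s / h * B := add_le_add hsumCompl hsumS
    _ = (s ^ q * A + s * B) / h := by ring
    _ ≤ 5 * (A + B) ^ 2 / h := by gcongr
    _ = 5 / h * (A + B) ^ 2 := by ring
end

section
/- Let t ∈ ℝⁿ_{≥0}, let A ∈ ℝ^{n×d} have full column rank, let x ∈ ℝ^d and y = Ax. Let j ∈ ℤ be such that 2^{j−1} ≤ t_i ≤ 2^j for all i ∈ [n]. Let h ≥ 1 and, for each i ∈ [n], set p_i = h·√τ_i where τ_i = a_iᵀ(AᵀA)⁻¹a_i is the leverage score of the i-th row of A. Then for 1 ≤ q ≤ 2 there is an absolute constant c such that Σ_{i∈[n]} (1/p_i)·(γ_q(t_i, y_i))² ≤ (c/h)·(Σ_{i∈[n]} γ_q(t_i, y_i))². -/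
open Matrix Finset

/-- The smoothed `q`-norm function `γ_q(t,x)`. -/
noncomputable def gammaFn (q t x : ℝ) : ℝ :=
  if |x| ≤ t then (q / 2) * t ^ (q - 2) * x ^ 2
  else |x| ^ q + (q / 2 - 1) * t ^ q

/-- The leverage score `τ_i(A) = a_iᵀ(AᵀA)⁻¹a_i` of the `i`-th row of `A`. -/
noncomputable def lev {n d : ℕ} (A : Matrix (Fin n) (Fin d) ℝ) (i : Fin n) : ℝ :=
  A i ⬝ᵥ ((Aᵀ * A)⁻¹.mulVec (A i))

/-!
With `y = Ax`, the `i`-th row `z` of the hat matrix `A(AᵀA)⁻¹Aᵀ` satisfies `z ⬝ y = y_i` and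
`‖z‖² = z_i = τ_i`, so Cauchy–Schwarz gives `y_i² ≤ τ_i ‖y‖²` and `τ_i ≤ 1`.

On the common scale `T = 2^j`, each `γ_q(t_i, ·)` agrees up to a factor 2 with
`m(u) = min(T^(q-2) u², |u|^q)`. Let `Φ = ∑ m(y_k)`. If `Φ < T^q`, no coordinate exceeds `T`,
so `‖y‖² = T^(2-q) Φ` and `m(y_i) ≤ T^(q-2) y_i² ≤ τ_i Φ`. If `Φ ≥ T^q`, then
`y_k² ≤ m(y_k) Φ^(2/q-1)` termwise, so `‖y‖² ≤ Φ^(2/q)` and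
`m(y_i) ≤ |y_i|^q ≤ (τ_i ‖y‖²)^(q/2) ≤ √τ_i Φ`. Hence `γ_i ≤ 4 √τ_i ∑ γ`, and summing
`γ_i² / (h √τ_i) ≤ (4/h) γ_i ∑ γ` gives the claim with `c = 4`.
-/

lemma rpow_le_two_mul_rpow_of_half_le {p t T : ℝ} (hp₁ : -1 ≤ p) (hp₀ : p ≤ 0) (hT : 0 < T)
    (ht : T / 2 ≤ t) : t ^ p ≤ 2 * T ^ p := by
  have hhalf : (1 / 2 : ℝ) ≤ 2 ^ p := by
    simpa [Real.rpow_neg_one] using Real.rpow_le_rpow_of_exponent_le (by norm_num : (1 : ℝ) ≤ 2) hp₁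
  calc t ^ p ≤ (T / 2) ^ p := Real.rpow_le_rpow_of_nonpos (by positivity) ht hp₀
    _ = T ^ p / 2 ^ p := Real.div_rpow hT.le zero_le_two p
    _ ≤ 2 * T ^ p := by
      rw [div_le_iff₀ (by positivity)]
      nlinarith [Real.rpow_pos_of_pos hT p]

lemma one_div_mul_mul_sq_le {a b h r : ℝ} (hh : 0 ≤ h) (ha : 0 ≤ a) (hb : 0 ≤ b)
    (hab : a ≤ r * b) : 1 / (h * r) * a ^ 2 ≤ b / h * a := by
  have hsq : a ^ 2 / r ≤ b * a := by
    rcases le_or_gt r 0 with hr | hr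
    · obtain rfl : a = 0 := le_antisymm (by nlinarith) ha
      simp
    · exact div_le_of_le_mul₀ hr.le (mul_nonneg hb ha) (by nlinarith)
  calc 1 / (h * r) * a ^ 2 = a ^ 2 / r / h := by ring
    _ ≤ b * a / h := div_le_div_of_nonneg_right hsq hh
    _ = b / h * a := by ring

lemma Matrix.isUnit_of_rank_eq_card {m K : Type*} [Fintype m] [DecidableEq m] [Field K]
    {M : Matrix m m K} (hM : M.rank = Fintype.card m) : IsUnit M := by
  refine mulVec_surjective_iff_isUnit.mp fun v => ?_
  have hrange : LinearMap.range M.mulVecLin = ⊤ :=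
    Submodule.eq_top_of_finrank_eq (by rw [Module.finrank_fintype_fun_eq_card]; exact hM)
  exact LinearMap.range_eq_top.mp hrange v

section Leverage

variable {n d : ℕ} (A : Matrix (Fin n) (Fin d) ℝ)

/-- The `i`-th row of the hat matrix `A (AᵀA)⁻¹ Aᵀ`. -/
noncomputable def leverageVector (i : Fin n) : Fin n → ℝ :=
  A *ᵥ ((Aᵀ * A)⁻¹ *ᵥ A i)

variable {A}

lemma leverageVector_dotProduct_mulVec (hA : A.rank = d) (i : Fin n) (x : Fin d → ℝ) :
    leverageVector A i ⬝ᵥ (A *ᵥ x) = (A *ᵥ x) i := by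
  have hunit : IsUnit (Aᵀ * A).det := by
    rw [← isUnit_iff_isUnit_det]
    exact isUnit_of_rank_eq_card (by rw [rank_transpose_mul_self, hA, Fintype.card_fin])
  rw [leverageVector, dotProduct_mulVec, ← mulVec_transpose, mulVec_mulVec, mulVec_mulVec,
    mul_nonsing_inv _ hunit, one_mulVec]
  rfl

lemma lev_eq_leverageVector_apply (i : Fin n) : lev A i = leverageVector A i i := rfl

lemma lev_eq_dotProduct_self (hA : A.rank = d) (i : Fin n) :
    lev A i = leverageVector A i ⬝ᵥ leverageVector A i := by
  rw [lev_eq_leverageVector_apply]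
  exact (leverageVector_dotProduct_mulVec hA i _).symm

lemma lev_nonneg (hA : A.rank = d) (i : Fin n) : 0 ≤ lev A i := by
  rw [lev_eq_dotProduct_self hA]
  exact dotProduct_self_star_nonneg _

lemma lev_le_one (hA : A.rank = d) (i : Fin n) : lev A i ≤ 1 := by
  have hsq : lev A i ^ 2 ≤ lev A i := by
    calc lev A i ^ 2 = leverageVector A i i ^ 2 := rfl
      _ ≤ ∑ k, leverageVector A i k ^ 2 :=
        single_le_sum (fun k _ => sq_nonneg (leverageVector A i k)) (mem_univ i)
      _ = lev A i := by simp only [lev_eq_dotProduct_self hA, dotProduct, sq]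
  nlinarith [lev_nonneg hA i]

lemma sq_mulVec_le_lev_mul (hA : A.rank = d) (i : Fin n) (x : Fin d → ℝ) :
    (A *ᵥ x) i ^ 2 ≤ lev A i * ∑ k, (A *ᵥ x) k ^ 2 := by
  have hcs := sum_mul_sq_le_sq_mul_sq univ (leverageVector A i) (A *ᵥ x)
  simp only [sq, ← dotProduct.eq_1, leverageVector_dotProduct_mulVec hA,
    ← lev_eq_dotProduct_self hA] at hcs ⊢
  exact hcs

end Leverage

section Approx

variable {q T t u : ℝ}

noncomputable def gammaApprox (q T u : ℝ) : ℝ := min (T ^ (q - 2) * u ^ 2) (|u| ^ q)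

lemma gammaApprox_nonneg (hT : 0 ≤ T) : 0 ≤ gammaApprox q T u :=
  le_min (by positivity) (by positivity)

lemma abs_rpow_eq_rpow_sub_two_mul_sq (hu : u ≠ 0) : |u| ^ q = |u| ^ (q - 2) * u ^ 2 := by
  rw [← sq_abs, ← Real.rpow_two, ← Real.rpow_add (abs_pos.2 hu)]
  norm_num

lemma rpow_sub_two_mul_sq_le_abs_rpow (hq₂ : q ≤ 2) (hu : |u| ≤ T) :
    T ^ (q - 2) * u ^ 2 ≤ |u| ^ q := by
  rcases eq_or_ne u 0 with rfl | hu₀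
  · simpa using Real.rpow_nonneg le_rfl q
  rw [abs_rpow_eq_rpow_sub_two_mul_sq hu₀]
  exact mul_le_mul_of_nonneg_right
    (Real.rpow_le_rpow_of_nonpos (abs_pos.2 hu₀) hu (by linarith)) (sq_nonneg u)

lemma abs_rpow_le_rpow_sub_two_mul_sq (hT : 0 < T) (hq₂ : q ≤ 2) (hu : T ≤ |u|) :
    |u| ^ q ≤ T ^ (q - 2) * u ^ 2 := by
  rw [abs_rpow_eq_rpow_sub_two_mul_sq (abs_pos.1 (hT.trans_le hu))]
  exact mul_le_mul_of_nonneg_right (Real.rpow_le_rpow_of_nonpos hT hu (by linarith)) (sq_nonneg u)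

lemma gammaApprox_of_abs_le (hq₂ : q ≤ 2) (hu : |u| ≤ T) :
    gammaApprox q T u = T ^ (q - 2) * u ^ 2 :=
  min_eq_left (rpow_sub_two_mul_sq_le_abs_rpow hq₂ hu)

lemma gammaApprox_of_le_abs (hT : 0 < T) (hq₂ : q ≤ 2) (hu : T ≤ |u|) :
    gammaApprox q T u = |u| ^ q :=
  min_eq_right (abs_rpow_le_rpow_sub_two_mul_sq hT hq₂ hu)

lemma gammaFn_le_gammaApprox (ht : 0 < t) (hq₂ : q ≤ 2) :
    gammaFn q t u ≤ gammaApprox q t u := by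
  unfold gammaFn
  split_ifs with hu
  · rw [gammaApprox_of_abs_le hq₂ hu, mul_assoc]
    nlinarith [mul_nonneg (Real.rpow_nonneg ht.le (q - 2)) (sq_nonneg u)]
  · rw [gammaApprox_of_le_abs ht hq₂ (le_of_not_ge hu)]
    nlinarith [Real.rpow_nonneg ht.le q]

lemma gammaApprox_le_two_mul_gammaFn (ht : 0 < t) (hq₁ : 1 ≤ q) (hq₂ : q ≤ 2) :
    gammaApprox q t u ≤ 2 * gammaFn q t u := by
  unfold gammaFn
  split_ifs with hu
  · rw [gammaApprox_of_abs_le hq₂ hu, mul_assoc]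
    nlinarith [mul_nonneg (Real.rpow_nonneg ht.le (q - 2)) (sq_nonneg u)]
  · have htu : t ^ q ≤ |u| ^ q := Real.rpow_le_rpow ht.le (le_of_not_ge hu) (by linarith)
    rw [gammaApprox_of_le_abs ht hq₂ (le_of_not_ge hu)]
    nlinarith [Real.rpow_nonneg ht.le q]

lemma gammaFn_nonneg (ht : 0 < t) (hq₁ : 1 ≤ q) (hq₂ : q ≤ 2) : 0 ≤ gammaFn q t u := by
  nlinarith [gammaApprox_le_two_mul_gammaFn (u := u) ht hq₁ hq₂,
    gammaApprox_nonneg (q := q) (u := u) ht.le]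

lemma gammaApprox_anti (ht : 0 < t) (hq₂ : q ≤ 2) (htT : t ≤ T) :
    gammaApprox q T u ≤ gammaApprox q t u :=
  min_le_min_right _ (mul_le_mul_of_nonneg_right
    (Real.rpow_le_rpow_of_nonpos ht htT (by linarith)) (sq_nonneg u))

lemma gammaApprox_le_two_mul_of_half_le (hT : 0 < T) (hq₁ : 1 ≤ q) (hq₂ : q ≤ 2)
    (ht : T / 2 ≤ t) : gammaApprox q t u ≤ 2 * gammaApprox q T u := by
  rw [gammaApprox, gammaApprox, mul_min_of_nonneg _ _ zero_le_two, ← mul_assoc]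
  gcongr
  · exact rpow_le_two_mul_rpow_of_half_le (by linarith) (by linarith) hT ht
  · linarith [Real.rpow_nonneg (abs_nonneg u) q]

lemma rpow_le_gammaApprox (hT : 0 < T) (hq₀ : 0 ≤ q) (hq₂ : q ≤ 2) (hu : T ≤ |u|) :
    T ^ q ≤ gammaApprox q T u := by
  rw [gammaApprox_of_le_abs hT hq₂ hu]
  exact Real.rpow_le_rpow hT.le hu hq₀

lemma sq_eq_rpow_mul_gammaApprox (hT : 0 < T) (hq₂ : q ≤ 2) (hu : |u| ≤ T) :
    u ^ 2 = T ^ (2 - q) * gammaApprox q T u := by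
  rw [gammaApprox_of_abs_le hq₂ hu, ← mul_assoc, ← Real.rpow_add hT]
  norm_num

lemma sq_le_gammaApprox_mul_rpow {Φ : ℝ} (hT : 0 < T) (hq₀ : 0 < q) (hq₂ : q ≤ 2)
    (hTΦ : T ^ q ≤ Φ) (huΦ : gammaApprox q T u ≤ Φ) :
    u ^ 2 ≤ gammaApprox q T u * Φ ^ (2 / q - 1) := by
  have hexp : 0 ≤ 2 / q - 1 := by rw [sub_nonneg, le_div_iff₀ hq₀]; linarith
  rcases le_total |u| T with hu | hu
  · have hT' : T ^ (2 - q) = (T ^ q) ^ (2 / q - 1) := by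
      rw [← Real.rpow_mul hT.le]; congr 1; field_simp
    rw [sq_eq_rpow_mul_gammaApprox hT hq₂ hu, mul_comm, hT']
    gcongr
    exact gammaApprox_nonneg hT.le
  · have hf : gammaApprox q T u = |u| ^ q := gammaApprox_of_le_abs hT hq₂ hu
    calc u ^ 2 = gammaApprox q T u * gammaApprox q T u ^ (2 / q - 1) := by
          rw [hf, ← Real.rpow_mul (abs_nonneg u), ← Real.rpow_add (hT.trans_le hu),
            show q + q * (2 / q - 1) = 2 by field_simp; ring, Real.rpow_two, sq_abs]
      _ ≤ gammaApprox q T u * Φ ^ (2 / q - 1) := by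
          gcongr
          · exact gammaApprox_nonneg hT.le
          · exact gammaApprox_nonneg hT.le

end Approx

section Sums

variable {ι : Type*} [Fintype ι] {q T : ℝ} {w : ι → ℝ}

lemma sum_sq_le_rpow_of_rpow_le (hT : 0 < T) (hq₀ : 0 < q) (hq₂ : q ≤ 2)
    (hΦ : T ^ q ≤ ∑ k, gammaApprox q T (w k)) :
    ∑ k, w k ^ 2 ≤ (∑ k, gammaApprox q T (w k)) ^ (2 / q) := by
  set Φ := ∑ k, gammaApprox q T (w k)
  have hΦ₀ : 0 < Φ := (Real.rpow_pos_of_pos hT q).trans_le hΦ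
  calc ∑ k, w k ^ 2 ≤ ∑ k, gammaApprox q T (w k) * Φ ^ (2 / q - 1) :=
        sum_le_sum fun k _ => sq_le_gammaApprox_mul_rpow hT hq₀ hq₂ hΦ
          (single_le_sum (fun j _ => gammaApprox_nonneg hT.le) (mem_univ k))
    _ = Φ ^ (2 / q) := by
        rw [← sum_mul, mul_comm, ← Real.rpow_add_one hΦ₀.ne']
        ring_nf

lemma sum_sq_eq_of_lt_rpow (hT : 0 < T) (hq₀ : 0 ≤ q) (hq₂ : q ≤ 2)
    (hΦ : ∑ k, gammaApprox q T (w k) < T ^ q) :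
    ∑ k, w k ^ 2 = T ^ (2 - q) * ∑ k, gammaApprox q T (w k) := by
  rw [mul_sum]
  refine sum_congr rfl fun k _ => sq_eq_rpow_mul_gammaApprox hT hq₂ ?_
  by_contra! hk
  have hkΦ := single_le_sum (fun j _ => gammaApprox_nonneg (q := q) (u := w j) hT.le) (mem_univ k)
  linarith [rpow_le_gammaApprox hT hq₀ hq₂ hk.le]

theorem gammaApprox_le_sqrt_mul_sum (hT : 0 < T) (hq₁ : 1 ≤ q) (hq₂ : q ≤ 2) {τ : ℝ}
    (hτ₀ : 0 ≤ τ) (hτ₁ : τ ≤ 1) (i : ι) (hw : w i ^ 2 ≤ τ * ∑ k, w k ^ 2) :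
    gammaApprox q T (w i) ≤ √τ * ∑ k, gammaApprox q T (w k) := by
  set Φ := ∑ k, gammaApprox q T (w k)
  have hΦ₀ : 0 ≤ Φ := sum_nonneg fun k _ => gammaApprox_nonneg hT.le
  rcases lt_or_ge Φ (T ^ q) with hΦ | hΦ
  · have hτ : τ ≤ √τ := (Real.le_sqrt hτ₀ hτ₀).mpr (by nlinarith)
    have hT₁ : T ^ (q - 2) * T ^ (2 - q) = 1 := by rw [← Real.rpow_add hT]; norm_num
    calc gammaApprox q T (w i) ≤ T ^ (q - 2) * w i ^ 2 := min_le_left _ _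
      _ ≤ T ^ (q - 2) * (τ * (T ^ (2 - q) * Φ)) := by
          rw [← sum_sq_eq_of_lt_rpow hT (by linarith) hq₂ hΦ]
          gcongr
      _ = τ * Φ := by linear_combination (τ * Φ) * hT₁
      _ ≤ √τ * Φ := by gcongr
  · calc gammaApprox q T (w i) ≤ |w i| ^ q := min_le_right _ _
      _ = (w i ^ 2) ^ (q / 2) := by
          rw [← sq_abs, ← Real.rpow_two, ← Real.rpow_mul (abs_nonneg _)]
          ring_nf
      _ ≤ (τ * ∑ k, w k ^ 2) ^ (q / 2) := by gcongr
      _ = τ ^ (q / 2) * (∑ k, w k ^ 2) ^ (q / 2) :=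
          Real.mul_rpow hτ₀ (sum_nonneg fun k _ => sq_nonneg _)
      _ ≤ τ ^ (1 / 2 : ℝ) * (Φ ^ (2 / q)) ^ (q / 2) := by
          refine mul_le_mul (Real.rpow_le_rpow_of_exponent_ge' hτ₀ hτ₁ (by norm_num) (by linarith))
            ?_ (by positivity) (by positivity)
          exact Real.rpow_le_rpow (by positivity)
            (sum_sq_le_rpow_of_rpow_le hT (by linarith) hq₂ hΦ) (by positivity)
      _ = √τ * Φ := by
          rw [Real.sqrt_eq_rpow, ← Real.rpow_mul hΦ₀, div_mul_div_cancel₀ (by linarith),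
            div_self two_ne_zero, Real.rpow_one]

end Sums

/-- variance bound: there is an absolute constant `c` such that for
`t ≥ 0` with `2^{j-1} ≤ t_i ≤ 2^j`, full column rank `A`, `y = Ax`, `h ≥ 1`,
`p_i = h√τ_i`, and `1 ≤ q ≤ 2`:
`Σ_i (1/p_i)(γ_q(t_i,y_i))² ≤ (c/h)(Σ_i γ_q(t_i,y_i))²`. -/
theorem stmt2 :
    ∃ c : ℝ, 0 < c ∧
      ∀ (n d : ℕ) (t : Fin n → ℝ) (A : Matrix (Fin n) (Fin d) ℝ),
        (∀ i, 0 ≤ t i) →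
        A.rank = d →
        ∀ (x : Fin d → ℝ) (j : ℤ),
        (∀ i, (2 : ℝ) ^ (j - 1) ≤ t i) → (∀ i, t i ≤ (2 : ℝ) ^ j) →
        ∀ h : ℝ, 1 ≤ h →
        ∀ q : ℝ, 1 ≤ q → q ≤ 2 →
        ∑ i, (1 / (h * Real.sqrt (lev A i))) * (gammaFn q (t i) ((A.mulVec x) i)) ^ 2
          ≤ (c / h) * (∑ i, gammaFn q (t i) ((A.mulVec x) i)) ^ 2 := by
  refine ⟨4, by norm_num, fun n d t A _ hA x j hj₁ hj₂ h hh q hq₁ hq₂ => ?_⟩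
  set T : ℝ := 2 ^ j
  have hT : 0 < T := zpow_pos two_pos j
  have hhalf : ∀ i, T / 2 ≤ t i := fun i => by
    simpa [zpow_sub_one₀, div_eq_mul_inv] using hj₁ i
  have ht : ∀ i, 0 < t i := fun i => (half_pos hT).trans_le (hhalf i)
  set y := A *ᵥ x
  set S := ∑ i, gammaFn q (t i) (y i)
  have hg₀ : ∀ i, 0 ≤ gammaFn q (t i) (y i) := fun i => gammaFn_nonneg (ht i) hq₁ hq₂
  have hΦ : ∑ k, gammaApprox q T (y k) ≤ 2 * S := by
    rw [mul_sum]
    exact sum_le_sum fun k _ => (gammaApprox_anti (ht k) hq₂ (hj₂ k)).trans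
      (gammaApprox_le_two_mul_gammaFn (ht k) hq₁ hq₂)
  have hpointwise : ∀ i, gammaFn q (t i) (y i) ≤ √(lev A i) * (4 * S) := fun i => calc
    gammaFn q (t i) (y i) ≤ 2 * gammaApprox q T (y i) :=
      (gammaFn_le_gammaApprox (ht i) hq₂).trans
        (gammaApprox_le_two_mul_of_half_le hT hq₁ hq₂ (hhalf i))
    _ ≤ 2 * (√(lev A i) * (2 * S)) := by
      gcongr
      exact (gammaApprox_le_sqrt_mul_sum hT hq₁ hq₂ (lev_nonneg hA i) (lev_le_one hA i) i
        (sq_mulVec_le_lev_mul hA i x)).trans (by gcongr)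
    _ = √(lev A i) * (4 * S) := by ring
  calc ∑ i, 1 / (h * √(lev A i)) * gammaFn q (t i) (y i) ^ 2
      ≤ ∑ i, 4 * S / h * gammaFn q (t i) (y i) :=
        sum_le_sum fun i _ => one_div_mul_mul_sq_le (by linarith) (hg₀ i)
          (mul_nonneg (by norm_num) (sum_nonneg fun k _ => hg₀ k)) (hpointwise i)
    _ = 4 / h * S ^ 2 := by rw [← mul_sum]; ring
end

section
/- Let y, ỹ, t ∈ ℝⁿ_{≥0} with ‖y − ỹ‖₁ ≤ α, ‖y‖₁ ≤ θ, and t_i ≥ 1 for all i. Let 1 ≤ q ≤ 2. Then |Σ_{i∈[n]} γ_q(t_i, ỹ_i) − Σ_{i∈[n]} γ_q(t_i, y_i)| ≤ Σ_{i∈[n]} |γ_q(t_i, ỹ_i) − γ_q(t_i, y_i)| ≤ 4·n·α·(α + θ). -/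
open Finset

/-!
For `x ≥ 0` and `t ≥ 1`, `γ_q(t, ·)` is monotone while `γ_q(t, x) - x²` is antitone: on `[0, t]`
the function is `c x²` with `0 ≤ c ≤ 1`, and on `[t, ∞)` it is `x^q` up to a constant, whose
growth is dominated by that of `x²` as `q ≤ 2`. Hence `0 ≤ γ_q(t, b) - γ_q(t, a) ≤ b² - a²` for
`0 ≤ a ≤ b`, so `γ_q(t, ·)` is `2M`-Lipschitz on `[-M, M]`, being even. With
`|yᵢ|, |ỹᵢ| ≤ α + θ` this bounds the sum by `2α(α + θ)`.
-/

namespace Real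

theorem rpow_sub_rpow_le_sq_sub_sq {q a b : ℝ} (hq : q ≤ 2) (ha : 1 ≤ a) (hab : a ≤ b) :
    b ^ q - a ^ q ≤ b ^ 2 - a ^ 2 := by
  have ha0 : 0 < a := by linarith
  have hb0 : 0 < b := by linarith
  have split : ∀ x : ℝ, 0 < x → x ^ q = x ^ (q - 2) * x ^ 2 := fun x hx => by
    rw [← rpow_natCast x 2, ← rpow_add hx]; norm_num
  have hba : b ^ (q - 2) ≤ a ^ (q - 2) := rpow_le_rpow_of_nonpos ha0 hab (by linarith)
  have ha1 : a ^ (q - 2) ≤ 1 := rpow_le_one_of_one_le_of_nonpos ha (by linarith)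
  have hsq : a ^ 2 ≤ b ^ 2 := pow_le_pow_left₀ ha0.le hab 2
  calc b ^ q - a ^ q = b ^ (q - 2) * b ^ 2 - a ^ (q - 2) * a ^ 2 := by rw [split b hb0, split a ha0]
    _ ≤ a ^ (q - 2) * (b ^ 2 - a ^ 2) := by nlinarith [sq_nonneg b]
    _ ≤ b ^ 2 - a ^ 2 := by nlinarith [rpow_nonneg ha0.le (q - 2)]

theorem antitoneOn_rpow_sub_sq {q : ℝ} (hq : q ≤ 2) :
    AntitoneOn (fun x : ℝ => x ^ q - x ^ 2) (Set.Ici 1) := fun a ha b _ hab => by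
  have := rpow_sub_rpow_le_sq_sub_sq hq ha hab
  dsimp only
  linarith

end Real

section Gamma

variable {q t : ℝ}

theorem gammaFn_abs (q t x : ℝ) : gammaFn q t |x| = gammaFn q t x := by
  simp only [gammaFn, abs_abs, sq_abs]

theorem gammaFn_of_abs_le {x : ℝ} (hx : |x| ≤ t) : gammaFn q t x = q / 2 * t ^ (q - 2) * x ^ 2 :=
  if_pos hx

theorem gammaFn_of_mem_Icc {x : ℝ} (hx : x ∈ Set.Icc 0 t) :
    gammaFn q t x = q / 2 * t ^ (q - 2) * x ^ 2 :=
  gammaFn_of_abs_le (by rw [abs_of_nonneg hx.1]; exact hx.2)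

theorem gammaFn_of_le {x : ℝ} (ht : 0 < t) (hx : t ≤ x) :
    gammaFn q t x = x ^ q + (q / 2 - 1) * t ^ q := by
  have hx0 : |x| = x := abs_of_pos (ht.trans_le hx)
  rcases hx.lt_or_eq with hlt | rfl
  · rw [gammaFn, if_neg (by rw [hx0]; exact hlt.not_ge), hx0]
  · -- both branches equal `(q / 2) x^q` at the junction `|x| = t`
    rw [gammaFn_of_abs_le hx0.le, ← Real.rpow_natCast, mul_assoc, ← Real.rpow_add ht]
    norm_num
    ring

theorem monotoneOn_gammaFn (hq0 : 0 ≤ q) (ht : 1 ≤ t) : MonotoneOn (gammaFn q t) (Set.Ici 0) := by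
  have ht0 : 0 < t := by linarith
  rw [← Set.Icc_union_Ici_eq_Ici ht0.le]
  refine MonotoneOn.union_right (c := t) ?_ ?_ (isGreatest_Icc ht0.le) isLeast_Ici
  · intro a ha b hb hab
    rw [gammaFn_of_mem_Icc ha, gammaFn_of_mem_Icc hb]
    have hc : 0 ≤ q / 2 * t ^ (q - 2) := by positivity
    exact mul_le_mul_of_nonneg_left (pow_le_pow_left₀ ha.1 hab 2) hc
  · intro a ha b hb hab
    rw [gammaFn_of_le ht0 ha, gammaFn_of_le ht0 hb]
    have := Real.monotoneOn_rpow_Ici_of_exponent_nonneg hq0 (ht0.le.trans ha) (ht0.le.trans hb) hab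
    simp only at this
    linarith

theorem antitoneOn_gammaFn_sub_sq (hq0 : 0 ≤ q) (hq2 : q ≤ 2) (ht : 1 ≤ t) :
    AntitoneOn (fun x => gammaFn q t x - x ^ 2) (Set.Ici 0) := by
  have ht0 : 0 < t := by linarith
  rw [← Set.Icc_union_Ici_eq_Ici ht0.le]
  refine AntitoneOn.union_right (c := t) ?_ ?_ (isGreatest_Icc ht0.le) isLeast_Ici
  · intro a ha b hb hab
    simp only
    rw [gammaFn_of_mem_Icc ha, gammaFn_of_mem_Icc hb]
    have hc : q / 2 * t ^ (q - 2) ≤ 1 := by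
      have := Real.rpow_le_one_of_one_le_of_nonpos ht (by linarith : q - 2 ≤ 0)
      nlinarith [Real.rpow_nonneg ht0.le (q - 2)]
    nlinarith [pow_le_pow_left₀ ha.1 hab 2]
  · intro a ha b hb hab
    have := Real.antitoneOn_rpow_sub_sq hq2 (ht.trans ha) (ht.trans hb) hab
    simp only at this ⊢
    rw [gammaFn_of_le ht0 ha, gammaFn_of_le ht0 hb]
    linarith

theorem abs_gammaFn_sub_gammaFn_le (hq0 : 0 ≤ q) (hq2 : q ≤ 2) (ht : 1 ≤ t) {a b M : ℝ}
    (ha : |a| ≤ M) (hb : |b| ≤ M) : |gammaFn q t b - gammaFn q t a| ≤ 2 * M * |b - a| := by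
  suffices key : ∀ a b : ℝ, 0 ≤ a → a ≤ b → b ≤ M →
      |gammaFn q t b - gammaFn q t a| ≤ 2 * M * |b - a| by
    rw [← gammaFn_abs q t a, ← gammaFn_abs q t b]
    refine le_trans ?_ (mul_le_mul_of_nonneg_left (abs_abs_sub_abs_le_abs_sub b a)
      (by linarith [abs_nonneg a]))
    rcases le_total |a| |b| with hab | hba
    · exact key _ _ (abs_nonneg a) hab hb
    · rw [abs_sub_comm, abs_sub_comm |b|]
      exact key _ _ (abs_nonneg b) hba ha
  intro a b ha hab hbM
  have hb : (0 : ℝ) ≤ b := ha.trans hab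
  have hmono := monotoneOn_gammaFn hq0 ht (Set.mem_Ici.2 ha) (Set.mem_Ici.2 hb) hab
  have hanti := antitoneOn_gammaFn_sub_sq hq0 hq2 ht (Set.mem_Ici.2 ha) (Set.mem_Ici.2 hb) hab
  simp only at hanti
  rw [abs_of_nonneg (sub_nonneg.2 hmono), abs_of_nonneg (sub_nonneg.2 hab)]
  nlinarith

end Gamma

theorem sum_abs_gammaFn_sub_gammaFn_le {ι : Type*} [Fintype ι] {q α θ : ℝ} (hq0 : 0 ≤ q)
    (hq2 : q ≤ 2) {y yt t : ι → ℝ} (ht : ∀ i, 1 ≤ t i) (hα : ∑ i, |y i - yt i| ≤ α)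
    (hθ : ∑ i, |y i| ≤ θ) :
    ∑ i, |gammaFn q (t i) (yt i) - gammaFn q (t i) (y i)| ≤ 2 * α * (α + θ) := by
  have hyθ : ∀ i, |y i| ≤ θ := fun i =>
    (single_le_sum (fun j _ => abs_nonneg (y j)) (mem_univ i)).trans hθ
  have hdiff : ∀ i, |y i - yt i| ≤ α := fun i =>
    (single_le_sum (fun j _ => abs_nonneg (y j - yt j)) (mem_univ i)).trans hα
  have hα0 : 0 ≤ α := (sum_nonneg fun i _ => abs_nonneg (y i - yt i)).trans hα
  have hθ0 : 0 ≤ θ := (sum_nonneg fun i _ => abs_nonneg (y i)).trans hθ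
  calc ∑ i, |gammaFn q (t i) (yt i) - gammaFn q (t i) (y i)|
      ≤ ∑ i, 2 * (α + θ) * |y i - yt i| := by
        refine sum_le_sum fun i _ => ?_
        rw [abs_sub_comm (y i)]
        refine abs_gammaFn_sub_gammaFn_le hq0 hq2 (ht i) (by linarith [hyθ i]) ?_
        linarith [hyθ i, hdiff i, abs_sub_abs_le_abs_sub (yt i) (y i), abs_sub_comm (yt i) (y i)]
    _ = 2 * (α + θ) * ∑ i, |y i - yt i| := (mul_sum _ _ _).symm
    _ ≤ 2 * α * (α + θ) := by nlinarith

theorem stmt5_general (n : ℕ) (y yt t : Fin n → ℝ) (α θ : ℝ)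
    (ht1 : ∀ i, 1 ≤ t i)
    (hα : ∑ i, |y i - yt i| ≤ α) (hθ : ∑ i, |y i| ≤ θ)
    (q : ℝ) (hq1 : 1 ≤ q) (hq2 : q ≤ 2) :
    |∑ i, gammaFn q (t i) (yt i) - ∑ i, gammaFn q (t i) (y i)|
        ≤ ∑ i, |gammaFn q (t i) (yt i) - gammaFn q (t i) (y i)| ∧
      ∑ i, |gammaFn q (t i) (yt i) - gammaFn q (t i) (y i)|
        ≤ 4 * n * α * (α + θ) := by
  refine ⟨by rw [← sum_sub_distrib]; exact abs_sum_le_sum_abs _ _, ?_⟩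
  rcases Nat.eq_zero_or_pos n with rfl | hn
  · simp
  have hbound := sum_abs_gammaFn_sub_gammaFn_le (by linarith) hq2 ht1 hα hθ
  have hα0 : 0 ≤ α := (sum_nonneg fun i _ => abs_nonneg (y i - yt i)).trans hα
  have hθ0 : 0 ≤ θ := (sum_nonneg fun i _ => abs_nonneg (y i)).trans hθ
  have hn1 : (1 : ℝ) ≤ n := by exact_mod_cast hn
  nlinarith [mul_nonneg hα0 (add_nonneg hα0 hθ0)]

/-- if `y, ỹ, t ≥ 0`, `‖y − ỹ‖₁ ≤ α`, `‖y‖₁ ≤ θ`, `t_i ≥ 1`, and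
`1 ≤ q ≤ 2`, then
`|Σ_i γ_q(t_i, ỹ_i) − Σ_i γ_q(t_i, y_i)| ≤ Σ_i |γ_q(t_i, ỹ_i) − γ_q(t_i, y_i)|
   ≤ 4nα(α + θ)`. -/
theorem stmt5 (n : ℕ) (y yt t : Fin n → ℝ) (α θ : ℝ)
    (hy0 : ∀ i, 0 ≤ y i) (hyt0 : ∀ i, 0 ≤ yt i) (ht0 : ∀ i, 0 ≤ t i)
    (ht1 : ∀ i, 1 ≤ t i)
    (hα : ∑ i, |y i - yt i| ≤ α) (hθ : ∑ i, |y i| ≤ θ)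
    (q : ℝ) (hq1 : 1 ≤ q) (hq2 : q ≤ 2) :
    |∑ i, gammaFn q (t i) (yt i) - ∑ i, gammaFn q (t i) (y i)|
        ≤ ∑ i, |gammaFn q (t i) (yt i) - gammaFn q (t i) (y i)| ∧
      ∑ i, |gammaFn q (t i) (yt i) - gammaFn q (t i) (y i)|
        ≤ 4 * n * α * (α + θ) :=
  stmt5_general n y yt t α θ ht1 hα hθ q hq1 hq2
end

section
/- Let 2 ≤ p < ∞, A ∈ ℝ^{n×d}, b ∈ ℝⁿ, C ∈ ℝ^{d×d}, v ∈ ℝ^d. Let x* minimize ‖Ax − b‖_p^p subject to Cx = v and let x⁽⁰⁾ minimize ‖Ax − b‖₂² subject to Cx = v. Then ‖Ax⁽⁰⁾ − b‖_p^p ≤ n^{(p−2)/2} · ‖Ax* − b‖_p^p. -/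
/-!
The least-squares residual is no larger in `ℓ²` than the residual of any feasible point, in
particular of `x*`. For `p ≥ 2` the `ℓᵖ` norm is bounded by the `ℓ²` norm, and conversely
`‖y‖₂ ≤ n^(1/2 - 1/p) ‖y‖_p` by the power mean inequality; chaining the three bounds, raised
to the `p`-th power, gives the factor `n^((p-2)/2)`.
-/

open Matrix Finset

theorem Real.sum_rpow_le_rpow_sum {ι : Type*} (s : Finset ι) {f : ι → ℝ}
    (hf : ∀ i ∈ s, 0 ≤ f i) {q : ℝ} (hq : 1 ≤ q) :
    ∑ i ∈ s, f i ^ q ≤ (∑ i ∈ s, f i) ^ q := by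
  induction s using Finset.cons_induction with
  | empty => simp [Real.zero_rpow (by linarith : q ≠ 0)]
  | cons a s ha ih =>
    rw [forall_mem_cons] at hf
    rw [sum_cons, sum_cons]
    calc f a ^ q + ∑ i ∈ s, f i ^ q ≤ f a ^ q + (∑ i ∈ s, f i) ^ q := by
          gcongr; exact ih hf.2
      _ ≤ (f a + ∑ i ∈ s, f i) ^ q :=
          Real.add_rpow_le_rpow_add hf.1 (sum_nonneg hf.2) hq

theorem Real.sq_rpow_div_two (y p : ℝ) : (y ^ 2) ^ (p / 2) = |y| ^ p := by
  rw [← sq_abs, ← Real.rpow_natCast, ← Real.rpow_mul (abs_nonneg y)]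
  norm_num [mul_div_cancel₀]

section

variable {ι : Type*} [Fintype ι] {p : ℝ}

theorem sum_abs_rpow_le_sum_sq_rpow (hp : 2 ≤ p) (y : ι → ℝ) :
    ∑ i, |y i| ^ p ≤ (∑ i, y i ^ 2) ^ (p / 2) := by
  simp_rw [← Real.sq_rpow_div_two _ p]
  exact Real.sum_rpow_le_rpow_sum _ (fun i _ => sq_nonneg (y i)) (by linarith)

theorem sum_sq_rpow_le_card_rpow_mul_sum_abs_rpow (hp : 2 ≤ p) (y : ι → ℝ) :
    (∑ i, y i ^ 2) ^ (p / 2) ≤ (Fintype.card ι : ℝ) ^ ((p - 2) / 2) * ∑ i, |y i| ^ p := by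
  have := Real.rpow_sum_le_const_mul_sum_rpow_of_nonneg univ (f := fun i => y i ^ 2)
    (by linarith : 1 ≤ p / 2) (fun i _ => sq_nonneg (y i))
  simpa [Real.sq_rpow_div_two, sub_div] using this

end

theorem stmt8_general (n d : ℕ) (p : ℝ) (hp : 2 ≤ p)
    (A : Matrix (Fin n) (Fin d) ℝ) (b : Fin n → ℝ)
    (C : Matrix (Fin d) (Fin d) ℝ) (v : Fin d → ℝ)
    (xstar x0 : Fin d → ℝ)
    (hxsF : C.mulVec xstar = v)
    (hx0Min : ∀ z, C.mulVec z = v →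
      ∑ i, ((A.mulVec x0 - b) i) ^ 2 ≤ ∑ i, ((A.mulVec z - b) i) ^ 2) :
    ∑ i, |(A.mulVec x0 - b) i| ^ p
      ≤ (n : ℝ) ^ ((p - 2) / 2) * ∑ i, |(A.mulVec xstar - b) i| ^ p := by
  calc ∑ i, |(A.mulVec x0 - b) i| ^ p
      ≤ (∑ i, ((A.mulVec x0 - b) i) ^ 2) ^ (p / 2) := sum_abs_rpow_le_sum_sq_rpow hp _
    _ ≤ (∑ i, ((A.mulVec xstar - b) i) ^ 2) ^ (p / 2) :=
        Real.rpow_le_rpow (sum_nonneg fun i _ => sq_nonneg _) (hx0Min xstar hxsF)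
          (by linarith)
    _ ≤ (n : ℝ) ^ ((p - 2) / 2) * ∑ i, |(A.mulVec xstar - b) i| ^ p := by
        simpa using sum_sq_rpow_le_card_rpow_mul_sum_abs_rpow hp (A.mulVec xstar - b)

/-- for `2 ≤ p < ∞`, if `x*` minimizes `‖Ax−b‖_p^p` subject to `Cx = v` and
`x⁽⁰⁾` minimizes `‖Ax−b‖₂²` subject to `Cx = v`, then
`‖Ax⁽⁰⁾−b‖_p^p ≤ n^{(p−2)/2} ‖Ax*−b‖_p^p`. -/
theorem stmt8 (n d : ℕ) (p : ℝ) (hp : 2 ≤ p)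
    (A : Matrix (Fin n) (Fin d) ℝ) (b : Fin n → ℝ)
    (C : Matrix (Fin d) (Fin d) ℝ) (v : Fin d → ℝ)
    (xstar x0 : Fin d → ℝ)
    (hxsF : C.mulVec xstar = v)
    (hxsMin : ∀ z, C.mulVec z = v →
      ∑ i, |(A.mulVec xstar - b) i| ^ p ≤ ∑ i, |(A.mulVec z - b) i| ^ p)
    (hx0F : C.mulVec x0 = v)
    (hx0Min : ∀ z, C.mulVec z = v →
      ∑ i, ((A.mulVec x0 - b) i) ^ 2 ≤ ∑ i, ((A.mulVec z - b) i) ^ 2) :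
    ∑ i, |(A.mulVec x0 - b) i| ^ p
      ≤ (n : ℝ) ^ ((p - 2) / 2) * ∑ i, |(A.mulVec xstar - b) i| ^ p :=
  stmt8_general n d p hp A b C v xstar x0 hxsF hx0Min
end

section
/- Let Z, Z̃ ∈ ℝ^{d×d} and C ∈ ℝ^{r×r} be symmetric positive definite matrices, let U ∈ ℝ^{r×d}, and let 0 < ε < 1. Suppose (1/(1+ε))·Z⁻¹ ⪯ Z̃⁻¹ ⪯ (1/(1−ε))·Z⁻¹ in the Loewner order. Then (1/(1+ε))·(Z + UᵀCU)⁻¹ ⪯ Z̃⁻¹ − Z̃⁻¹Uᵀ(C⁻¹ + U Z̃⁻¹ Uᵀ)⁻¹ U Z̃⁻¹ ⪯ (1/(1−ε))·(Z + UᵀCU)⁻¹. -/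
/-!
By Sherman–Morrison–Woodbury the middle matrix is `(Z̃ + UᵀCU)⁻¹`. Since inversion is antitone
on positive definite matrices, the hypothesis says `(1 - ε) Z ⪯ Z̃ ⪯ (1 + ε) Z`; adding the
positive semidefinite `UᵀCU` keeps `(1 - ε)(Z + UᵀCU) ⪯ Z̃ + UᵀCU ⪯ (1 + ε)(Z + UᵀCU)`, and
inverting once more gives the claim.
-/

open Matrix
open scoped MatrixOrder ComplexOrder

namespace Matrix

variable {n 𝕜 : Type*} [RCLike 𝕜]

theorem le_smul_self {R : Matrix n n 𝕜} {c : ℝ} (hc : 1 ≤ c) (hR : 0 ≤ R) : R ≤ c • R := by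
  rw [le_iff, show c • R - R = (c - 1) • R by module]
  exact (nonneg_iff_posSemidef.1 hR).smul (sub_nonneg.2 hc)

theorem smul_le_self {R : Matrix n n 𝕜} {c : ℝ} (hc : c ≤ 1) (hR : 0 ≤ R) : c • R ≤ R := by
  rw [le_iff, show R - c • R = (1 - c) • R by module]
  exact (nonneg_iff_posSemidef.1 hR).smul (sub_nonneg.2 hc)

theorem add_le_smul_add {A B R : Matrix n n 𝕜} {c : ℝ} (hc : 1 ≤ c) (hR : 0 ≤ R)
    (h : B ≤ c • A) : B + R ≤ c • (A + R) :=
  calc B + R ≤ c • A + c • R := add_le_add h (le_smul_self hc hR)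
    _ = c • (A + R) := (smul_add c A R).symm

theorem smul_add_le_add {A B R : Matrix n n 𝕜} {c : ℝ} (hc : c ≤ 1) (hR : 0 ≤ R)
    (h : c • A ≤ B) : c • (A + R) ≤ B + R :=
  calc c • (A + R) = c • A + c • R := smul_add c A R
    _ ≤ B + R := add_le_add h (smul_le_self hc hR)

variable [Fintype n] [DecidableEq n]

theorem inv_real_smul {A : Matrix n n 𝕜} (hA : IsUnit A) {c : ℝ} (hc : c ≠ 0) :
    (c • A)⁻¹ = c⁻¹ • A⁻¹ := by
  rw [RCLike.real_smul_eq_coe_smul (K := 𝕜), RCLike.real_smul_eq_coe_smul (K := 𝕜),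
    RCLike.ofReal_inv]
  exact inv_smul' A (Units.mk0 (c : 𝕜) (RCLike.ofReal_ne_zero.2 hc))
    ((isUnit_iff_isUnit_det A).1 hA)

/-- `A⁻¹ - B⁻¹ = B⁻¹ (B - A) B⁻¹ + (B⁻¹ (B - A)) A⁻¹ ((B - A) B⁻¹)` is a sum of congruences of
positive semidefinite matrices. -/
theorem PosDef.inv_le_inv_of_le {A B : Matrix n n 𝕜} (hA : A.PosDef) (hB : B.PosDef)
    (h : A ≤ B) : B⁻¹ ≤ A⁻¹ := by
  have hAd := (isUnit_iff_isUnit_det A).1 hA.isUnit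
  have hBd := (isUnit_iff_isUnit_det B).1 hB.isUnit
  have hBinv : (B⁻¹)ᴴ = B⁻¹ := hB.inv.isHermitian
  have hBA : (B - A)ᴴ = B - A := h.isHermitian
  have key : A⁻¹ - B⁻¹ = B⁻¹ * (B - A) * B⁻¹ + (B⁻¹ * (B - A)) * A⁻¹ * ((B - A) * B⁻¹) := by
    simp only [Matrix.mul_sub, Matrix.sub_mul, Matrix.mul_assoc,
      nonsing_inv_mul_cancel_left _ _ hAd, nonsing_inv_mul _ hBd, mul_nonsing_inv _ hBd,
      mul_nonsing_inv _ hAd, Matrix.mul_one, Matrix.one_mul]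
    abel
  have hBAB : ((B - A) * B⁻¹)ᴴ = B⁻¹ * (B - A) := by rw [conjTranspose_mul, hBinv, hBA]
  rw [le_iff, key]
  have := (h.mul_mul_conjTranspose_same B⁻¹).add
    (hA.inv.posSemidef.conjTranspose_mul_mul_same ((B - A) * B⁻¹))
  rwa [hBinv, hBAB] at this

theorem PosDef.inv_le_inv_iff {A B : Matrix n n 𝕜} (hA : A.PosDef) (hB : B.PosDef) :
    A⁻¹ ≤ B⁻¹ ↔ B ≤ A := by
  refine ⟨fun h => ?_, hB.inv_le_inv_of_le hA⟩
  simpa only [nonsing_inv_nonsing_inv _ ((isUnit_iff_isUnit_det _).1 hA.isUnit),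
    nonsing_inv_nonsing_inv _ ((isUnit_iff_isUnit_det _).1 hB.isUnit)]
    using hA.inv.inv_le_inv_of_le hB.inv h

theorem PosDef.smul_inv_le_inv_iff {A B : Matrix n n 𝕜} (hA : A.PosDef) (hB : B.PosDef)
    {c : ℝ} (hc : 0 < c) : c • A⁻¹ ≤ B⁻¹ ↔ B ≤ c⁻¹ • A := by
  rw [← (hA.smul (inv_pos.2 hc)).inv_le_inv_iff hB, inv_real_smul hA.isUnit (inv_ne_zero hc.ne'),
    inv_inv]

theorem PosDef.inv_le_smul_inv_iff {A B : Matrix n n 𝕜} (hA : A.PosDef) (hB : B.PosDef)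
    {c : ℝ} (hc : 0 < c) : B⁻¹ ≤ c • A⁻¹ ↔ c⁻¹ • A ≤ B := by
  rw [← hB.inv_le_inv_iff (hA.smul (inv_pos.2 hc)), inv_real_smul hA.isUnit (inv_ne_zero hc.ne'),
    inv_inv]

end Matrix

/-- numerical stability of Sherman–Morrison–Woodbury inverse maintenance.
If `Z, Z̃, C` are symmetric positive definite, `0 < ε < 1`, and
`(1/(1+ε))Z⁻¹ ⪯ Z̃⁻¹ ⪯ (1/(1−ε))Z⁻¹` in the Loewner order, then
`(1/(1+ε))(Z + UᵀCU)⁻¹ ⪯ Z̃⁻¹ − Z̃⁻¹Uᵀ(C⁻¹ + UZ̃⁻¹Uᵀ)⁻¹UZ̃⁻¹ ⪯ (1/(1−ε))(Z + UᵀCU)⁻¹`. -/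
theorem stmt13 (d r : ℕ)
    (Z Zt : Matrix (Fin d) (Fin d) ℝ) (C : Matrix (Fin r) (Fin r) ℝ)
    (U : Matrix (Fin r) (Fin d) ℝ)
    (hZ : Z.PosDef) (hZt : Zt.PosDef) (hC : C.PosDef)
    (ε : ℝ) (hε0 : 0 < ε) (hε1 : ε < 1)
    (hlow : (Zt⁻¹ - (1 / (1 + ε)) • Z⁻¹).PosSemidef)
    (hhigh : ((1 / (1 - ε)) • Z⁻¹ - Zt⁻¹).PosSemidef) :
    ((Zt⁻¹ - Zt⁻¹ * Uᵀ * (C⁻¹ + U * Zt⁻¹ * Uᵀ)⁻¹ * U * Zt⁻¹)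
        - (1 / (1 + ε)) • (Z + Uᵀ * C * U)⁻¹).PosSemidef ∧
      ((1 / (1 - ε)) • (Z + Uᵀ * C * U)⁻¹
        - (Zt⁻¹ - Zt⁻¹ * Uᵀ * (C⁻¹ + U * Zt⁻¹ * Uᵀ)⁻¹ * U * Zt⁻¹)).PosSemidef := by
  have hR : (Uᵀ * C * U).PosSemidef := by
    simpa using hC.posSemidef.conjTranspose_mul_mul_same U
  have hS : (C⁻¹ + U * Zt⁻¹ * Uᵀ).PosDef :=
    hC.inv.add_posSemidef (by simpa using hZt.inv.posSemidef.mul_mul_conjTranspose_same U)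
  rw [← add_mul_mul_inv_eq_sub Zt Uᵀ C U hZt.isUnit hC.isUnit hS.isUnit]
  have hZR := hZ.add_posSemidef hR
  have hZtR := hZt.add_posSemidef hR
  have hR0 : 0 ≤ Uᵀ * C * U := nonneg_iff_posSemidef.2 hR
  have hc₁ : 0 < 1 / (1 - ε) := one_div_pos.2 (sub_pos.2 hε1)
  constructor
  · have hZt_le : Zt ≤ (1 / (1 + ε))⁻¹ • Z := (hZ.smul_inv_le_inv_iff hZt (by positivity)).1 hlow
    refine (hZR.smul_inv_le_inv_iff hZtR (by positivity)).2 (add_le_smul_add ?_ hR0 hZt_le)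
    rw [one_div, inv_inv]
    linarith
  · have hZ_le : (1 / (1 - ε))⁻¹ • Z ≤ Zt := (hZ.inv_le_smul_inv_iff hZt hc₁).1 hhigh
    refine (hZR.inv_le_smul_inv_iff hZtR hc₁).2 (smul_add_le_add ?_ hR0 hZ_le)
    rw [one_div, inv_inv]
    linarith
end

section
/- Let A ∈ ℝ^{n×d} have full column rank, b ∈ ℝⁿ, λ ≥ 1, and let M ∈ ℝ^{d×d} be a symmetric positive definite matrix with AᵀA ⪯ M ⪯ λ·AᵀA in the Loewner order. Let x* = argmin_x ‖Ax − b‖₂² and define the iteration x⁽ᵏ⁺¹⁾ = x⁽ᵏ⁾ − M⁻¹(AᵀA·x⁽ᵏ⁾ − Aᵀb). Then for every k ≥ 0, ‖x⁽ᵏ⁾ − x*‖_M ≤ (1 − 1/λ)^k · ‖x⁽⁰⁾ − x*‖_M. -/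
/-!
By the normal equations `AᵀA x* = Aᵀb`, the error `e = x⁽ᵏ⁾ - x*` is mapped to `y` with
`M y = D e`, where `D = M - AᵀA` satisfies `0 ⪯ D ⪯ μ M` for `μ = 1 - 1/λ`.
Cauchy–Schwarz for the form of `D` then gives
`(yᵀMy)² = (eᵀDy)² ≤ (eᵀDe)(yᵀDy) ≤ μ² (eᵀMe)(yᵀMy)`, i.e. `‖y‖_M ≤ μ ‖e‖_M`.
-/

open Matrix

namespace Matrix

variable {m n : Type*} [Fintype m] [Fintype n]

lemma PosSemidef.dotProduct_mulVec_self_nonneg {D : Matrix n n ℝ} (hD : D.PosSemidef)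
    (x : n → ℝ) : 0 ≤ x ⬝ᵥ D *ᵥ x := by
  simpa using hD.dotProduct_mulVec_nonneg x

lemma PosSemidef.dotProduct_mulVec_le {M D : Matrix n n ℝ} (h : (M - D).PosSemidef) (x : n → ℝ) :
    x ⬝ᵥ D *ᵥ x ≤ x ⬝ᵥ M *ᵥ x := by
  have := h.dotProduct_mulVec_self_nonneg x
  rw [sub_mulVec, dotProduct_sub] at this
  linarith

lemma PosSemidef.dotProduct_mulVec_comm {D : Matrix n n ℝ} (hD : D.PosSemidef) (x y : n → ℝ) :
    x ⬝ᵥ D *ᵥ y = y ⬝ᵥ D *ᵥ x := by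
  rw [dotProduct_mulVec, ← mulVec_transpose, isHermitian_iff_isSymm.mp hD.isHermitian,
    dotProduct_comm]

lemma PosSemidef.dotProduct_mulVec_sq_le {D : Matrix n n ℝ} (hD : D.PosSemidef) (x y : n → ℝ) :
    (x ⬝ᵥ D *ᵥ y) ^ 2 ≤ (x ⬝ᵥ D *ᵥ x) * (y ⬝ᵥ D *ᵥ y) := by
  classical
  simpa only [toBilin'_apply'] using (toBilin' D).apply_sq_le_of_symm
    (by simpa only [toBilin'_apply'] using hD.dotProduct_mulVec_self_nonneg)
    ⟨fun u v => by
      simpa only [toBilin'_apply', RingHom.id_apply] using hD.dotProduct_mulVec_comm u v⟩ x y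

lemma dotProduct_mulVec_le_sq_mul_of_mulVec_eq {M D : Matrix n n ℝ} {μ : ℝ}
    (hM : M.PosSemidef) (hD : D.PosSemidef) (hDM : (μ • M - D).PosSemidef)
    {e y : n → ℝ} (hy : M *ᵥ y = D *ᵥ e) :
    y ⬝ᵥ M *ᵥ y ≤ μ ^ 2 * (e ⬝ᵥ M *ᵥ e) := by
  set t := y ⬝ᵥ M *ᵥ y
  have hsmul (v : n → ℝ) : v ⬝ᵥ (μ • M) *ᵥ v = μ * (v ⬝ᵥ M *ᵥ v) := by
    rw [smul_mulVec, dotProduct_smul, smul_eq_mul]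
  have het : e ⬝ᵥ D *ᵥ y = t := by
    rw [hD.dotProduct_mulVec_comm, ← hy]
  have hcs : t ^ 2 ≤ μ ^ 2 * (e ⬝ᵥ M *ᵥ e) * t := calc
    t ^ 2 = (e ⬝ᵥ D *ᵥ y) ^ 2 := by rw [het]
    _ ≤ (e ⬝ᵥ D *ᵥ e) * (y ⬝ᵥ D *ᵥ y) := hD.dotProduct_mulVec_sq_le e y
    _ ≤ (μ * (e ⬝ᵥ M *ᵥ e)) * (μ * t) := by
      rw [← hsmul, ← hsmul]
      exact mul_le_mul (hDM.dotProduct_mulVec_le e) (hDM.dotProduct_mulVec_le y)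
        (hD.dotProduct_mulVec_self_nonneg y)
        ((hD.dotProduct_mulVec_self_nonneg e).trans (hDM.dotProduct_mulVec_le e))
    _ = μ ^ 2 * (e ⬝ᵥ M *ᵥ e) * t := by ring
  rcases (show 0 ≤ t from hM.dotProduct_mulVec_self_nonneg y).eq_or_lt with ht | ht
  · rw [← ht]; exact mul_nonneg (sq_nonneg μ) (hM.dotProduct_mulVec_self_nonneg e)
  · exact le_of_mul_le_mul_right (by nlinarith) ht

lemma sqrt_dotProduct_mulVec_le_mul_of_mulVec_eq {M D : Matrix n n ℝ} {μ : ℝ} (hμ : 0 ≤ μ)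
    (hM : M.PosSemidef) (hD : D.PosSemidef) (hDM : (μ • M - D).PosSemidef)
    {e y : n → ℝ} (hy : M *ᵥ y = D *ᵥ e) :
    √(y ⬝ᵥ M *ᵥ y) ≤ μ * √(e ⬝ᵥ M *ᵥ e) := by
  rw [← Real.sqrt_sq hμ, ← Real.sqrt_mul (sq_nonneg μ)]
  exact Real.sqrt_le_sqrt (dotProduct_mulVec_le_sq_mul_of_mulVec_eq hM hD hDM hy)

theorem transpose_mul_mulVec_eq_of_forall_sum_sq_le {A : Matrix m n ℝ} {b : m → ℝ} {x : n → ℝ}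
    (hx : ∀ z, ∑ i, ((A *ᵥ x - b) i) ^ 2 ≤ ∑ i, ((A *ᵥ z - b) i) ^ 2) :
    (Aᵀ * A) *ᵥ x = Aᵀ *ᵥ b := by
  set r := A *ᵥ x - b
  set s := Aᵀ *ᵥ r
  have hsum (v : m → ℝ) : ∑ i, v i ^ 2 = v ⬝ᵥ v := by simp [dotProduct, sq]
  have hsr : (A *ᵥ s) ⬝ᵥ r = s ⬝ᵥ s := by
    rw [dotProduct_comm, dotProduct_mulVec, ← mulVec_transpose]
  -- `t ↦ ‖r - t • A s‖² - ‖r‖²` is a nonnegative quadratic, so its discriminant `4 ‖s‖⁴` vanishes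
  have hquad (t : ℝ) : 0 ≤ ((A *ᵥ s) ⬝ᵥ (A *ᵥ s)) * (t * t) + -(2 * (s ⬝ᵥ s)) * t + 0 := by
    have h := hx (x - t • s)
    have hres : A *ᵥ (x - t • s) - b = r - t • (A *ᵥ s) := by
      rw [mulVec_sub, mulVec_smul, sub_right_comm]
    rw [hsum, hsum, hres] at h
    simp only [dotProduct_sub, sub_dotProduct, dotProduct_smul, smul_dotProduct, smul_eq_mul,
      dotProduct_comm r (A *ᵥ s), hsr] at h
    linarith
  have hs : s ⬝ᵥ s = 0 := by
    have := discrim_le_zero hquad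
    rw [discrim] at this
    nlinarith
  rw [← mulVec_mulVec, ← sub_eq_zero, ← mulVec_sub]
  exact dotProduct_self_eq_zero.mp hs

theorem mulVec_richardson_error {R : Type*} [CommRing R] [DecidableEq n] {M G : Matrix n n R}
    (hM : IsUnit M) {c xs : n → R} (hxs : G *ᵥ xs = c) (x : n → R) :
    M *ᵥ (x - M⁻¹ *ᵥ (G *ᵥ x - c) - xs) = (M - G) *ᵥ (x - xs) := by
  rw [← hxs, ← mulVec_sub, mulVec_sub, mulVec_sub, mulVec_mulVec,
    mul_nonsing_inv M ((isUnit_iff_isUnit_det M).mp hM), one_mulVec, sub_mulVec, mulVec_sub,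
    mulVec_sub]
  abel

end Matrix

theorem stmt14_general (n d : ℕ) (A : Matrix (Fin n) (Fin d) ℝ)
    (b : Fin n → ℝ) (lam : ℝ) (hlam : 1 ≤ lam)
    (M : Matrix (Fin d) (Fin d) ℝ) (hM : M.PosDef)
    (hlow : (M - Aᵀ * A).PosSemidef)
    (hhigh : (lam • (Aᵀ * A) - M).PosSemidef)
    (xstar : Fin d → ℝ)
    (hxstar : ∀ z, ∑ i, ((A.mulVec xstar - b) i) ^ 2 ≤ ∑ i, ((A.mulVec z - b) i) ^ 2)
    (x : ℕ → Fin d → ℝ)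
    (hiter : ∀ k, x (k + 1)
      = x k - M⁻¹.mulVec ((Aᵀ * A).mulVec (x k) - Aᵀ.mulVec b)) :
    ∀ k : ℕ,
      Real.sqrt ((x k - xstar) ⬝ᵥ M.mulVec (x k - xstar))
        ≤ (1 - 1 / lam) ^ k * Real.sqrt ((x 0 - xstar) ⬝ᵥ M.mulVec (x 0 - xstar)) := by
  have hlam0 : 0 < lam := one_pos.trans_le hlam
  have hμ : 0 ≤ 1 - 1 / lam := sub_nonneg.mpr ((div_le_one hlam0).mpr hlam)
  have hDM : ((1 - 1 / lam) • M - (M - Aᵀ * A)).PosSemidef := by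
    convert hhigh.smul (one_div_nonneg.mpr hlam0.le) using 1
    rw [smul_sub, smul_smul, one_div_mul_cancel hlam0.ne', one_smul, sub_smul, one_smul]
    abel
  have hnormal := transpose_mul_mulVec_eq_of_forall_sum_sq_le hxstar
  intro k
  refine le_geom (u := fun k => √((x k - xstar) ⬝ᵥ M *ᵥ (x k - xstar))) hμ k fun j _ => ?_
  refine sqrt_dotProduct_mulVec_le_mul_of_mulVec_eq hμ hM.posSemidef hlow hDM ?_
  rw [hiter]
  exact mulVec_richardson_error hM.isUnit hnormal (x j)

/-- preconditioned Richardson iteration.  If `A` has full column rank,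
`λ ≥ 1`, `M` is symmetric positive definite with `AᵀA ⪯ M ⪯ λAᵀA`,
`x* = argmin ‖Ax−b‖₂²`, and `x⁽ᵏ⁺¹⁾ = x⁽ᵏ⁾ − M⁻¹(AᵀAx⁽ᵏ⁾ − Aᵀb)`, then
`‖x⁽ᵏ⁾ − x*‖_M ≤ (1 − 1/λ)^k ‖x⁽⁰⁾ − x*‖_M`, where `‖v‖_M = √(vᵀMv)`. -/
theorem stmt14 (n d : ℕ) (A : Matrix (Fin n) (Fin d) ℝ) (hA : A.rank = d)
    (b : Fin n → ℝ) (lam : ℝ) (hlam : 1 ≤ lam)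
    (M : Matrix (Fin d) (Fin d) ℝ) (hM : M.PosDef)
    (hlow : (M - Aᵀ * A).PosSemidef)
    (hhigh : (lam • (Aᵀ * A) - M).PosSemidef)
    (xstar : Fin d → ℝ)
    (hxstar : ∀ z, ∑ i, ((A.mulVec xstar - b) i) ^ 2 ≤ ∑ i, ((A.mulVec z - b) i) ^ 2)
    (x : ℕ → Fin d → ℝ)
    (hiter : ∀ k, x (k + 1)
      = x k - M⁻¹.mulVec ((Aᵀ * A).mulVec (x k) - Aᵀ.mulVec b)) :
    ∀ k : ℕ,
      Real.sqrt ((x k - xstar) ⬝ᵥ M.mulVec (x k - xstar))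
        ≤ (1 - 1 / lam) ^ k * Real.sqrt ((x 0 - xstar) ⬝ᵥ M.mulVec (x 0 - xstar)) :=
  stmt14_general n d A b lam hlam M hM hlow hhigh xstar hxstar x hiter
end
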